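/- Let d ≤ n with n ≥ 2 and let {E_i}_{i=1}^n be an equiangular POVM on ℂ^d, i.e., E_i = (d/n)Π_i where each Π_i is a rank-one orthogonal projection, tr(Π_i Π_j) = (n−d)/(d(n−1)) for all i ≠ j, and Σ_i E_i = I. Then its disturbance satisfies D = Σ_{l,m} (tr(√E_l √E_m))² − 2 Σ_l (tr √E_l)² + d² = n(d−1)²/(n−1). -/

import Mathlib

open Matrix BigOperators
open scoped ComplexOrder

/-! Since `Π_i` is a projection, `(√(d/n) • Π_i)² = E_i`, so `√E_i = √(d/n) • Π_i`. Hence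
`tr √E_l = √(d/n)`, while `tr (√E_l √E_m) = (d/n) tr (Π_l Π_m)` equals `d/n` for `l = m` and
`(n-d)/(n(n-1))` otherwise; summing these `n` diagonal and `n(n-1)` off-diagonal terms gives the
closed form. -/

/-- The positive semidefinite square root of a positive semidefinite matrix
(as defined in Mathlib of December 2024, since removed). -/
noncomputable def Matrix.PosSemidef.sqrt {𝕜 : Type*} [RCLike 𝕜] {m : Type*} [Fintype m]
    [DecidableEq m] {A : Matrix m m 𝕜} (hA : A.PosSemidef) : Matrix m m 𝕜 :=
  (hA.1.eigenvectorUnitary : Matrix m m 𝕜) *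
    diagonal (fun i => ((Real.sqrt (hA.1.eigenvalues i) : ℝ) : 𝕜)) *
    (star hA.1.eigenvectorUnitary : Matrix m m 𝕜)

namespace Matrix

variable {𝕜 : Type*} [RCLike 𝕜] {m : Type*} [Fintype m] [DecidableEq m]

open scoped MatrixOrder in
theorem PosSemidef.sqrt_eq_cfcSqrt {A : Matrix m m 𝕜} (hA : A.PosSemidef) :
    hA.sqrt = CFC.sqrt A := by
  rw [CFC.sqrt_eq_real_sqrt A hA.nonneg, cfcₙ_eq_cfc, hA.1.cfc_eq Real.sqrt]
  simp [IsHermitian.cfc, PosSemidef.sqrt, Unitary.conjStarAlgAut_apply, Function.comp_def]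

open scoped MatrixOrder in
theorem PosSemidef.sqrt_eq_of_sq_eq {A B : Matrix m m 𝕜} (hA : A.PosSemidef)
    (hB : B.PosSemidef) (h : B ^ 2 = A) : hA.sqrt = B := by
  rw [hA.sqrt_eq_cfcSqrt, CFC.sqrt_unique (by rw [← sq, h]) hB.nonneg]

theorem PosSemidef.sqrt_eq_sqrt_smul_of_idempotent {A P : Matrix m m 𝕜} (hA : A.PosSemidef)
    (hP : P.IsHermitian) (hPP : P * P = P) {r : ℝ} (hr : 0 ≤ r) (hAP : A = (r : 𝕜) • P) :
    hA.sqrt = (√r : 𝕜) • P := by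
  refine hA.sqrt_eq_of_sq_eq ?_ ?_
  · have hPpos : P.PosSemidef := by
      simpa [hP.eq, hPP] using posSemidef_conjTranspose_mul_self P
    exact hPpos.smul (RCLike.ofReal_nonneg.mpr (Real.sqrt_nonneg r))
  · rw [hAP, sq, smul_mul_smul_comm, hPP, ← RCLike.ofReal_mul, Real.mul_self_sqrt hr]

end Matrix

theorem Finset.sum_sum_of_diag_offDiag {ι R : Type*} [Fintype ι] [DecidableEq ι] [CommRing R]
    (f : ι → ι → R) {a b : R} (hdiag : ∀ i, f i i = a) (hoff : ∀ i j, i ≠ j → f i j = b) :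
    ∑ i, ∑ j, f i j = Fintype.card ι * a + Fintype.card ι * (Fintype.card ι - 1) * b := by
  have h : ∀ i j, f i j = b + if i = j then a - b else 0 := by
    intro i j
    split_ifs with hij
    · subst hij; rw [hdiag]; ring
    · rw [hoff i j hij, add_zero]
  simp only [h, Finset.sum_add_distrib, Finset.sum_ite_eq, Finset.mem_univ, if_true,
    Finset.sum_const, Finset.card_univ, nsmul_eq_mul]
  ring

theorem ea_povm_disturbance_general
    (d n : ℕ) (hn : 2 ≤ n)
    (P : Fin n → Matrix (Fin d) (Fin d) ℂ)
    (hproj : ∀ i, (P i).IsHermitian ∧ P i * P i = P i ∧ (P i).trace = 1)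
    (hangle : ∀ i j, i ≠ j →
      (P i * P j).trace = ((((n : ℝ) - d) / ((d : ℝ) * ((n : ℝ) - 1)) : ℝ) : ℂ))
    (E : Fin n → Matrix (Fin d) (Fin d) ℂ)
    (hEdef : ∀ i, E i = ((d : ℂ) / (n : ℂ)) • P i)
    (hE : ∀ i, (E i).PosSemidef) :
    ∑ l, ∑ m, (((hE l).sqrt * (hE m).sqrt).trace.re) ^ 2
        - 2 * ∑ l, (((hE l).sqrt).trace.re) ^ 2 + (d : ℝ) ^ 2
      = (n : ℝ) * ((d : ℝ) - 1) ^ 2 / ((n : ℝ) - 1) := by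
  have hd : (d : ℝ) ≠ 0 := by
    have htr := (hproj ⟨0, by omega⟩).2.2
    rintro hd
    obtain rfl : d = 0 := by exact_mod_cast hd
    simp [Matrix.trace] at htr
  have hn1 : (n : ℝ) - 1 ≠ 0 := by
    rw [sub_ne_zero]; exact_mod_cast (by omega : n ≠ 1)
  have hsqrt : ∀ i, (hE i).sqrt = ((√(d / n : ℝ) : ℝ) : ℂ) • P i := fun i =>
    (hE i).sqrt_eq_sqrt_smul_of_idempotent (hproj i).1 (hproj i).2.1 (by positivity)
      (by rw [hEdef]; push_cast; rfl)
  have htr : ∀ l, ((hE l).sqrt.trace).re = √(d / n : ℝ) := by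
    simp [hsqrt, (hproj _).2.2]
  have htr_mul : ∀ l m,
      ((hE l).sqrt * (hE m).sqrt).trace = ((d / n : ℝ) : ℂ) * (P l * P m).trace := by
    intro l m
    rw [hsqrt, hsqrt, smul_mul_smul_comm, trace_smul, smul_eq_mul, ← Complex.ofReal_mul,
      Real.mul_self_sqrt (by positivity)]
  rw [Finset.sum_sum_of_diag_offDiag _ (a := (d / n : ℝ) ^ 2)
    (b := (((n : ℝ) - d) / (n * ((n : ℝ) - 1))) ^ 2)]
  · simp only [htr, Real.sq_sqrt (by positivity : (0 : ℝ) ≤ d / n), Finset.sum_const,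
      Finset.card_univ, Fintype.card_fin, nsmul_eq_mul]
    field_simp
    ring
  · intro l
    rw [htr_mul, (hproj l).2.1, (hproj l).2.2, mul_one, Complex.ofReal_re]
  · intro l m hlm
    rw [htr_mul, hangle l m hlm, ← Complex.ofReal_mul, Complex.ofReal_re]
    field_simp

/-- For an equiangular POVM `{E_i = (d/n)Π_i}` on `ℂ^d` (with `d ≤ n`, `n ≥ 2`,
each `Π_i` a rank-one orthogonal projection, `tr(Π_i Π_j) = (n−d)/(d(n−1))` for `i ≠ j`,
and `Σ_i E_i = I`), the disturbance satisfies
`D = Σ_{l,m} (tr(√E_l √E_m))² − 2 Σ_l (tr √E_l)² + d² = n(d−1)²/(n−1)`. -/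
theorem ea_povm_disturbance
    (d n : ℕ) (hdn : d ≤ n) (hn : 2 ≤ n)
    (P : Fin n → Matrix (Fin d) (Fin d) ℂ)
    (hproj : ∀ i, (P i).IsHermitian ∧ P i * P i = P i ∧ (P i).trace = 1)
    (hangle : ∀ i j, i ≠ j →
      (P i * P j).trace = ((((n : ℝ) - d) / ((d : ℝ) * ((n : ℝ) - 1)) : ℝ) : ℂ))
    (E : Fin n → Matrix (Fin d) (Fin d) ℂ)
    (hEdef : ∀ i, E i = ((d : ℂ) / (n : ℂ)) • P i)
    (hE : ∀ i, (E i).PosSemidef)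
    (hsum : ∑ i, E i = 1) :
    ∑ l, ∑ m, (((hE l).sqrt * (hE m).sqrt).trace.re) ^ 2
        - 2 * ∑ l, (((hE l).sqrt).trace.re) ^ 2 + (d : ℝ) ^ 2
      = (n : ℝ) * ((d : ℝ) - 1) ^ 2 / ((n : ℝ) - 1) :=
  ea_povm_disturbance_general d n hn P hproj hangle E hEdef hE
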